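/- Let (V, r, par) be a finite rooted tree and ℓ, w : V → ℝ. Let O be the union of all covered service subtrees (with respect to w). Then O is itself a covered service subtree, and every covered service subtree is contained in O; in particular there is a unique inclusion-maximal covered service subtree. -/

import Mathlib

/-!
Covered service subtrees are closed under union. To add a covered `Z₂` to a covered `Z₁`,
graft the branches of `Z₂` hanging below `Z₁` one at a time: grafting the branch of `Z₂`
below an exit vertex `y` (with `y ∉ Z₁`, `par y ∈ Z₁`) changes the sum over `Z₁ ∩ desc x`
either not at all or by the sum over that whole branch, which is nonnegative because `Z₂`
is covered at `y`. Hence a covered service subtree of maximal cardinality contains all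
the others.
-/

open scoped Classical

/-- `u` is a descendant of `v` (equivalently, `v` is an ancestor of `u`). -/
def IsDesc {V : Type*} (par : V → V) (u v : V) : Prop := ∃ n : ℕ, par^[n] u = v

/-- `Z` is a subtree rooted at `v`. -/
def IsSubtree {V : Type*} [DecidableEq V] (par : V → V) (v : V) (Z : Finset V) : Prop :=
  v ∈ Z ∧ (∀ u ∈ Z, IsDesc par u v) ∧ ∀ u ∈ Z, u ≠ v → par u ∈ Z

/-- `Z` is a covered subtree rooted at `z` (with respect to the waiting costs `w`). -/
def Covered {V : Type*} [Fintype V] [DecidableEq V] (par : V → V) (ℓ w : V → ℝ)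
    (z : V) (Z : Finset V) : Prop :=
  IsSubtree par z Z ∧ ∀ x ∈ Z, x ≠ z →
    ∑ u ∈ Z.filter (fun u => IsDesc par u x), ℓ u ≤
      ∑ u ∈ Z.filter (fun u => IsDesc par u x), w u

open Finset

namespace IsDesc

variable {V : Type*} {par : V → V}

lemma refl (u : V) : IsDesc par u u := ⟨0, rfl⟩

lemma trans {u v x : V} (h₁ : IsDesc par u v) (h₂ : IsDesc par v x) : IsDesc par u x := by
  obtain ⟨n, rfl⟩ := h₁
  obtain ⟨m, rfl⟩ := h₂
  exact ⟨m + n, Function.iterate_add_apply par m n u⟩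

lemma par_left_of_ne {u y : V} (h : IsDesc par u y) (hne : u ≠ y) : IsDesc par (par u) y := by
  obtain ⟨n, rfl⟩ := h
  obtain ⟨k, rfl⟩ := Nat.exists_eq_succ_of_ne_zero (fun h0 : n = 0 => hne (by simp [h0]))
  exact ⟨k, (Function.iterate_succ_apply par k u).symm⟩

lemma total {u x y : V} (hx : IsDesc par u x) (hy : IsDesc par u y) :
    IsDesc par x y ∨ IsDesc par y x := by
  obtain ⟨j, rfl⟩ := hx
  obtain ⟨k, rfl⟩ := hy
  rcases le_total j k with h | h
  · exact Or.inl ⟨k - j, by rw [← Function.iterate_add_apply, Nat.sub_add_cancel h]⟩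
  · exact Or.inr ⟨j - k, by rw [← Function.iterate_add_apply, Nat.sub_add_cancel h]⟩

end IsDesc

section ServiceSubtree

variable {V : Type*} [DecidableEq V] {par : V → V} {r : V}

lemma IsSubtree.iterate_mem (hroot : par r = r) {Z : Finset V} (hZ : IsSubtree par r Z)
    {u : V} (hu : u ∈ Z) (n : ℕ) : par^[n] u ∈ Z := by
  induction n with
  | zero => exact hu
  | succ n ih =>
    rw [Function.iterate_succ_apply']
    by_cases h : par^[n] u = r
    · rw [h, hroot]
      exact hZ.1
    · exact hZ.2.2 _ ih h

lemma IsSubtree.mem_of_isDesc (hroot : par r = r) {Z : Finset V} (hZ : IsSubtree par r Z)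
    {u y : V} (hu : u ∈ Z) (h : IsDesc par u y) : y ∈ Z := by
  obtain ⟨n, rfl⟩ := h
  exact hZ.iterate_mem hroot hu n

lemma exists_isDesc_not_mem_par_mem (hreach : ∀ v, ∃ n : ℕ, par^[n] v = r) {Z : Finset V}
    (hr : r ∈ Z) {u : V} (hu : u ∉ Z) : ∃ y, IsDesc par u y ∧ y ∉ Z ∧ par y ∈ Z := by
  obtain ⟨N, hN⟩ := hreach u
  induction N generalizing u with
  | zero => exact absurd ((show u = r from hN) ▸ hr) hu
  | succ N ih =>
    by_cases hpu : par u ∈ Z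
    · exact ⟨u, IsDesc.refl u, hu, hpu⟩
    · obtain ⟨y, hy, hyZ, hpy⟩ := ih hpu hN
      exact ⟨y, IsDesc.trans ⟨1, rfl⟩ hy, hyZ, hpy⟩

lemma IsSubtree.union_filter_isDesc {Z₁ Z₂ : Finset V} (h₁ : IsSubtree par r Z₁)
    (h₂ : IsSubtree par r Z₂) {y : V} (hpy : par y ∈ Z₁) :
    IsSubtree par r (Z₁ ∪ Z₂.filter (IsDesc par · y)) := by
  refine ⟨mem_union_left _ h₁.1, fun u hu => ?_, fun u hu hur => ?_⟩
  · rcases mem_union.mp hu with hu | hu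
    exacts [h₁.2.1 u hu, h₂.2.1 u (mem_filter.mp hu).1]
  · rcases mem_union.mp hu with hu | hu
    · exact mem_union_left _ (h₁.2.2 u hu hur)
    obtain ⟨hu₂, huy⟩ := mem_filter.mp hu
    by_cases huy' : u = y
    · exact mem_union_left _ (huy' ▸ hpy)
    · exact mem_union_right _ (mem_filter.mpr ⟨h₂.2.2 u hu₂ hur, huy.par_left_of_ne huy'⟩)

variable [Fintype V] {ℓ w : V → ℝ}

lemma covered_singleton (ℓ w : V → ℝ) : Covered par ℓ w r {r} :=
  ⟨⟨mem_singleton_self r, fun u hu => mem_singleton.mp hu ▸ IsDesc.refl u,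
    fun _ hu hur => absurd (mem_singleton.mp hu) hur⟩,
    fun _ hx hxr => absurd (mem_singleton.mp hx) hxr⟩

lemma Covered.union_filter_isDesc (hroot : par r = r) {Z₁ Z₂ : Finset V}
    (h₁ : Covered par ℓ w r Z₁) (h₂ : Covered par ℓ w r Z₂) {y : V} (hy₂ : y ∈ Z₂)
    (hy₁ : y ∉ Z₁) (hpy : par y ∈ Z₁) :
    Covered par ℓ w r (Z₁ ∪ Z₂.filter (IsDesc par · y)) := by
  set B := Z₂.filter (IsDesc par · y)
  have hB₁ : ∀ v ∈ B, v ∉ Z₁ := fun v hv hv₁ =>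
    hy₁ (h₁.1.mem_of_isDesc hroot hv₁ (mem_filter.mp hv).2)
  refine ⟨h₁.1.union_filter_isDesc h₂.1 hpy, fun x hx hxr => ?_⟩
  rw [filter_union]
  rcases mem_union.mp hx with hx₁ | hxB
  · by_cases hyx : IsDesc par y x
    · have hBx : B.filter (IsDesc par · x) = B :=
        filter_true_of_mem fun v hv => (mem_filter.mp hv).2.trans hyx
      have hdisj : Disjoint (Z₁.filter (IsDesc par · x)) B :=
        disjoint_left.mpr fun v hv hvB => hB₁ v hvB (mem_filter.mp hv).1
      have hx_cov := h₁.2 x hx₁ hxr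
      have hy_cov := h₂.2 y hy₂ (fun h => hy₁ (h ▸ h₁.1.1))
      rw [hBx, sum_union hdisj, sum_union hdisj]
      linarith
    · have hBx : B.filter (IsDesc par · x) = ∅ := by
        refine filter_eq_empty_iff.mpr fun v hv hvx => ?_
        rcases hvx.total (mem_filter.mp hv).2 with hxy | hyx'
        exacts [hy₁ (h₁.1.mem_of_isDesc hroot hx₁ hxy), hyx hyx']
      rw [hBx, union_empty]
      exact h₁.2 x hx₁ hxr
  · obtain ⟨hx₂, hxy⟩ := mem_filter.mp hxB
    have hx₁ : x ∉ Z₁ := hB₁ x hxB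
    have hZ₁x : Z₁.filter (IsDesc par · x) = ∅ :=
      filter_eq_empty_iff.mpr fun v hv hvx => hx₁ (h₁.1.mem_of_isDesc hroot hv hvx)
    have hBx : B.filter (IsDesc par · x) = Z₂.filter (IsDesc par · x) := by
      rw [filter_filter]
      exact filter_congr fun v _ => ⟨And.right, fun hvx => ⟨hvx.trans hxy, hvx⟩⟩
    rw [hZ₁x, hBx, empty_union]
    exact h₂.2 x hx₂ (fun h => hx₁ (h ▸ h₁.1.1))

theorem Covered.union (hroot : par r = r) (hreach : ∀ v, ∃ n : ℕ, par^[n] v = r)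
    {Z₁ Z₂ : Finset V} (h₁ : Covered par ℓ w r Z₁) (h₂ : Covered par ℓ w r Z₂) :
    Covered par ℓ w r (Z₁ ∪ Z₂) := by
  by_cases hsub : Z₂ ⊆ Z₁
  · rwa [union_eq_left.mpr hsub]
  obtain ⟨u, hu₂, hu₁⟩ := not_subset.mp hsub
  obtain ⟨y, huy, hy₁, hpy⟩ := exists_isDesc_not_mem_par_mem hreach h₁.1.1 hu₁
  have hy₂ : y ∈ Z₂ := h₂.1.mem_of_isDesc hroot hu₂ huy
  have hlt : (Z₂ \ (Z₁ ∪ Z₂.filter (IsDesc par · y))).card < (Z₂ \ Z₁).card := by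
    refine card_lt_card ((ssubset_iff_of_subset ?_).mpr ⟨y, mem_sdiff.mpr ⟨hy₂, hy₁⟩, ?_⟩)
    · exact sdiff_subset_sdiff subset_rfl subset_union_left
    · refine fun hy => (mem_sdiff.mp hy).2 (mem_union_right _ ?_)
      exact mem_filter.mpr ⟨hy₂, IsDesc.refl y⟩
  have hgraft := (h₁.union_filter_isDesc hroot h₂ hy₂ hy₁ hpy).union hroot hreach h₂
  rwa [union_assoc, union_eq_right.mpr (filter_subset _ _)] at hgraft
termination_by (Z₂ \ Z₁).card

theorem exists_covered_forall_covered_subset (hroot : par r = r)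
    (hreach : ∀ v, ∃ n : ℕ, par^[n] v = r) (ℓ w : V → ℝ) :
    ∃ M, Covered par ℓ w r M ∧ ∀ Z, Covered par ℓ w r Z → Z ⊆ M := by
  obtain ⟨M, hM, hmax⟩ := (univ.filter (Covered par ℓ w r)).exists_max_image card
    ⟨{r}, mem_filter.mpr ⟨mem_univ _, covered_singleton ℓ w⟩⟩
  have hM : Covered par ℓ w r M := (mem_filter.mp hM).2
  refine ⟨M, hM, fun Z hZ => ?_⟩
  have hZM := hZ.union hroot hreach hM
  have hcard := hmax _ (mem_filter.mpr ⟨mem_univ _, hZM⟩)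
  exact union_eq_right.mp (eq_of_subset_of_card_le subset_union_right hcard).symm

end ServiceSubtree

/-- The union `O` of all covered service subtrees is itself a covered service subtree,
contains every covered service subtree, and consequently is the unique
inclusion-maximal covered service subtree. -/
theorem stmt6 {V : Type*} [Fintype V] [DecidableEq V]
    (r : V) (par : V → V) (hroot : par r = r) (hreach : ∀ v, ∃ n : ℕ, par^[n] v = r)
    (ℓ w : V → ℝ) :
    let O : Finset V := Finset.univ.filter (fun u => ∃ Z, Covered par ℓ w r Z ∧ u ∈ Z)
    Covered par ℓ w r O ∧ (∀ Z, Covered par ℓ w r Z → Z ⊆ O) ∧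
      ∃! M : Finset V, Covered par ℓ w r M ∧ ∀ Z, Covered par ℓ w r Z → Z ⊆ M := by
  intro O
  obtain ⟨M, hM, hMmax⟩ := exists_covered_forall_covered_subset hroot hreach ℓ w
  have hOM : O = M := by
    ext u
    simp only [O, mem_filter, mem_univ, true_and]
    exact ⟨fun ⟨Z, hZ, hu⟩ => hMmax Z hZ hu, fun hu => ⟨M, hM, hu⟩⟩
  rw [hOM]
  exact ⟨hM, hMmax, M, ⟨hM, hMmax⟩,
    fun M' ⟨hM', hM'max⟩ => (hMmax M' hM').antisymm (hM'max M hM)⟩
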